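/- For every n ≥ 1, the commutator subgroup of G_n equals ker q_n. Consequently: the abelianization of G_n is isomorphic (as a group) to A_n; G_n is nonabelian; and G_n is nilpotent of nilpotency class exactly 2 (its commutator subgroup is nontrivial and contained in its center). -/

import Mathlib

/-- The abelian group `A_n = ℤ/3 ⊕ (ℤ/9)^n`. -/
abbrev An (n : ℕ) : Type := ZMod 3 × (Fin n → ZMod 9)

/-- Projection onto the `ℤ/3` factor. -/
def pi0 {n : ℕ} (a : An n) : ZMod 3 := a.1

/-- The reduction map `ℤ/9 → ℤ/3`. -/
def red : ZMod 9 →+* ZMod 3 := ZMod.castHom (show 3 ∣ 9 by norm_num) (ZMod 3)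

/-- The `i`-th `ℤ/9` coordinate reduced mod 3. -/
def pii {n : ℕ} (i : Fin n) (a : An n) : ZMod 3 := red (a.2 i)

/-- The 2-cocycle `θ(σ,τ) i = π₀(σ)·π_i(τ)`. -/
def theta {n : ℕ} (σ τ : An n) : Fin n → ZMod 3 := fun i => pi0 σ * pii i τ

/-- The underlying set of the group `G_n`. -/
def Gn (n : ℕ) : Type := (Fin n → ZMod 3) × An n

namespace Gn

variable {n : ℕ}

instance instFintype : Fintype (Gn n) :=
  inferInstanceAs (Fintype ((Fin n → ZMod 3) × An n))

instance instDecEq : DecidableEq (Gn n) :=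
  inferInstanceAs (DecidableEq ((Fin n → ZMod 3) × An n))

lemma theta_add_left (a b c : An n) : theta (a + b) c = theta a c + theta b c := by
  funext i; simp only [theta, pi0, Pi.add_apply, Prod.fst_add]; ring

lemma theta_add_right (a b c : An n) : theta a (b + c) = theta a b + theta a c := by
  funext i
  simp only [theta, pii, pi0, Pi.add_apply, Prod.snd_add, map_add]
  ring

lemma theta_zero_left (a : An n) : theta 0 a = 0 := by
  funext i; simp [theta, pi0]

lemma theta_zero_right (a : An n) : theta a 0 = 0 := by
  funext i; simp [theta, pii]

lemma theta_neg_left (a b : An n) : theta (-a) b = - theta a b := by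
  funext i; simp only [theta, pi0, Prod.fst_neg, Pi.neg_apply]; ring

/-- The group structure on `G_n` given by the cocycle `θ`. -/
instance instGroup : Group (Gn n) where
  mul x y := (x.1 + y.1 + theta x.2 y.2, x.2 + y.2)
  one := (0, 0)
  inv x := (-x.1 + theta x.2 x.2, -x.2)
  mul_assoc x y z := by
    apply Prod.ext
    · show x.1 + y.1 + theta x.2 y.2 + z.1 + theta (x.2 + y.2) z.2
        = x.1 + (y.1 + z.1 + theta y.2 z.2) + theta x.2 (y.2 + z.2)
      rw [theta_add_left, theta_add_right]; abel
    · exact add_assoc _ _ _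
  one_mul x := by
    apply Prod.ext
    · show 0 + x.1 + theta 0 x.2 = x.1
      rw [theta_zero_left]; abel
    · exact zero_add _
  mul_one x := by
    apply Prod.ext
    · show x.1 + 0 + theta x.2 0 = x.1
      rw [theta_zero_right]; abel
    · exact add_zero _
  inv_mul_cancel x := by
    apply Prod.ext
    · show -x.1 + theta x.2 x.2 + x.1 + theta (-x.2) x.2 = 0
      rw [theta_neg_left]; abel
    · exact neg_add_cancel _

/-- The quotient map `q_n : G_n → A_n`, `(c, a) ↦ a`. -/
def qn (x : Gn n) : An n := x.2

lemma qn_mul (x y : Gn n) : qn (x * y) = qn x + qn y := rfl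

/-- `q_n` as a group homomorphism to (the multiplicative version of) `A_n`. -/
def qnHom : Gn n →* Multiplicative (An n) where
  toFun x := Multiplicative.ofAdd (qn x)
  map_one' := rfl
  map_mul' _ _ := rfl

end Gn

section Proof

variable {n : ℕ}

lemma theta_neg_right (a b : An n) : theta a (-b) = - theta a b := by
  funext i; simp only [theta, pii, pi0, Prod.snd_neg, Pi.neg_apply, map_neg]; ring

lemma Gn.mul_def (x y : Gn n) :
    x * y = (x.1 + y.1 + theta x.2 y.2, x.2 + y.2) := rfl

lemma Gn.inv_def (x : Gn n) : x⁻¹ = (-x.1 + theta x.2 x.2, -x.2) := rfl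

lemma Gn.one_def : (1 : Gn n) = (0, 0) := rfl

lemma Gn.commutator_eq (x y : Gn n) :
    x * y * x⁻¹ * y⁻¹ = (theta x.2 y.2 - theta y.2 x.2, 0) := by
  show ((x.1 + y.1 + theta x.2 y.2 + (-x.1 + theta x.2 x.2) + theta (x.2 + y.2) (-x.2))
      + (-y.1 + theta y.2 y.2) + theta (x.2 + y.2 + -x.2) (-y.2), x.2 + y.2 + -x.2 + -y.2)
      = (theta x.2 y.2 - theta y.2 x.2, 0)
  apply Prod.ext
  · funext i
    simp only [theta, pi0, pii, Pi.add_apply, Pi.neg_apply, Pi.sub_apply,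
      Prod.fst_add, Prod.snd_add, Prod.fst_neg, Prod.snd_neg, map_add, map_neg]
    ring
  · show x.2 + y.2 + -x.2 + -y.2 = 0
    abel

lemma Gn.mem_ker_iff (x : Gn n) : x ∈ (Gn.qnHom (n := n)).ker ↔ x.2 = 0 :=
  Iff.rfl

lemma Gn.commutator_eq_ker : commutator (Gn n) = (Gn.qnHom (n := n)).ker := by
  apply le_antisymm
  · exact Abelianization.commutator_subset_ker _
  · intro x hx
    obtain ⟨d, a⟩ := x
    have ha : a = 0 := hx
    subst ha
    set u : Gn n := (0, ((1 : ZMod 3), 0)) with hu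
    set v : Gn n := (0, (0, fun i => ((d i).val : ZMod 9))) with hv
    have key : ((d, 0) : Gn n) = u * v * u⁻¹ * v⁻¹ := by
      rw [Gn.commutator_eq]
      apply Prod.ext
      · funext i
        show d i = (theta ((1 : ZMod 3), 0) (0, fun i => ((d i).val : ZMod 9))
          - theta (0, fun i => ((d i).val : ZMod 9)) ((1 : ZMod 3), 0)) i
        have hred : ∀ c : ZMod 3, red ((c.val : ℕ) : ZMod 9) = c := by
          intro c; rw [map_natCast, ZMod.natCast_val, ZMod.cast_id]
        simp only [theta, pi0, pii, Pi.sub_apply, map_zero]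
        rw [hred (d i)]
        ring
      · rfl
    rw [key, commutator_def]
    exact Subgroup.commutator_mem_commutator (Subgroup.mem_top u) (Subgroup.mem_top v)

lemma Gn.ker_le_center : (Gn.qnHom (n := n)).ker ≤ Subgroup.center (Gn n) := by
  intro x hx
  have hx2 : x.2 = 0 := hx
  rw [Subgroup.mem_center_iff]
  intro y
  rw [Gn.mul_def, Gn.mul_def, hx2, theta_zero_left, theta_zero_right]
  apply Prod.ext
  · show y.1 + x.1 + 0 = x.1 + y.1 + 0
    abel
  · exact add_comm _ _

end Proof

/-- The commutator subgroup of `G_n` equals `ker q_n`; consequently the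
abelianization of `G_n` is isomorphic to `A_n`, `G_n` is nonabelian, and `G_n` is
nilpotent of nilpotency class exactly `2` (its commutator subgroup is nontrivial and
contained in its center). -/
theorem stmt_6 (n : ℕ) (hn : 1 ≤ n) :
    commutator (Gn n) = (Gn.qnHom (n := n)).ker ∧
    Nonempty (Abelianization (Gn n) ≃* Multiplicative (An n)) ∧
    (∃ a b : Gn n, a * b ≠ b * a) ∧
    Group.IsNilpotent (Gn n) ∧
    commutator (Gn n) ≠ ⊥ ∧
    commutator (Gn n) ≤ Subgroup.center (Gn n) ∧
    (⊤ : Subgroup (Gn n)).lowerCentralSeries 2 = ⊥ ∧ (⊤ : Subgroup (Gn n)).lowerCentralSeries 1 ≠ ⊥ := by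
  have hck := Gn.commutator_eq_ker (n := n)
  have hcenter : commutator (Gn n) ≤ Subgroup.center (Gn n) :=
    hck ▸ Gn.ker_le_center
  have i0 : Fin n := ⟨0, hn⟩
  have hsurj : Function.Surjective (Gn.qnHom (n := n)) := fun a => ⟨(0, a), rfl⟩
  have hnab : ∃ a b : Gn n, a * b ≠ b * a := by
    refine ⟨(0, ((1 : ZMod 3), 0)), (0, (0, fun _ => (1 : ZMod 9))), fun h => ?_⟩
    change (((0 : Fin n → ZMod 3) + 0 + theta ((1 : ZMod 3), (0 : Fin n → ZMod 9)) (0, fun _ => (1 : ZMod 9)),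
        ((1 : ZMod 3), (0 : Fin n → ZMod 9)) + (0, fun _ => (1 : ZMod 9))) : (Fin n → ZMod 3) × An n)
      = ((0 : Fin n → ZMod 3) + 0 + theta (0, fun _ => (1 : ZMod 9)) ((1 : ZMod 3), (0 : Fin n → ZMod 9)),
        (0, fun _ => (1 : ZMod 9)) + ((1 : ZMod 3), (0 : Fin n → ZMod 9))) at h
    have h2 := congrFun (congrArg Prod.fst h) i0
    simp only [theta, pi0, pii, Pi.add_apply, Pi.zero_apply, map_one, map_zero,
      mul_one, mul_zero, one_mul, zero_mul, zero_add, add_zero] at h2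
    exact one_ne_zero h2
  have hcne : commutator (Gn n) ≠ ⊥ := by
    intro hbot
    rcases hnab with ⟨a, b, hab⟩
    apply hab
    have hmem : a * b * a⁻¹ * b⁻¹ ∈ commutator (Gn n) := by
      rw [commutator_def]
      exact Subgroup.commutator_mem_commutator (Subgroup.mem_top a) (Subgroup.mem_top b)
    rw [hbot, Subgroup.mem_bot] at hmem
    exact commutatorElement_eq_one_iff_mul_comm.mp hmem
  have hlcs2 : (⊤ : Subgroup (Gn n)).lowerCentralSeries 2 = ⊥ := by
    have h2 : (⊤ : Subgroup (Gn n)).lowerCentralSeries 2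
        = ⁅commutator (Gn n), (⊤ : Subgroup (Gn n))⁆ := rfl
    rw [h2, Subgroup.commutator_eq_bot_iff_le_centralizer, Subgroup.coe_top,
      Subgroup.centralizer_univ]
    exact hcenter
  have hlcs1 : (⊤ : Subgroup (Gn n)).lowerCentralSeries 1 ≠ ⊥ := by
    rw [Subgroup.top_lowerCentralSeries_one]; exact hcne
  refine ⟨hck, ?_, hnab, Subgroup.nilpotent_iff_lowerCentralSeries.mpr ⟨2, hlcs2⟩,
    hcne, hcenter, hlcs2, hlcs1⟩
  exact ⟨(QuotientGroup.quotientMulEquivOfEq hck).trans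
    (QuotientGroup.quotientKerEquivOfSurjective _ hsurj)⟩
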